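/- Let U, V be Hilbert spaces, B* : V → U linear with ‖B*v‖_U = ‖v‖_V for all v ∈ V, and b(u,v) := (u, B*v)_U. Let V_δ ⊆ V be a finite-dimensional subspace and define U_δ := B*(V_δ). Then the discrete inf-sup constant β_δ := inf_{u_δ ∈ U_δ, u_δ≠0} sup_{v_δ ∈ V_δ, v_δ≠0} b(u_δ, v_δ)/(‖u_δ‖_U ‖v_δ‖_V) equals 1. -/

import Mathlib

/-! A norm-preserving `B*` preserves inner products, so for `u = B* w` with `w ∈ V_δ` the
quotient `b(u, v) / (‖u‖ ‖v‖)` is the cosine `⟪w, v⟫ / (‖w‖ ‖v‖)` on `V_δ`: it is at most 1 by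
Cauchy–Schwarz and equals 1 at `v = w`. Every inner supremum is therefore 1. -/

open RealInnerProductSpace

theorem iSup_real_inner_div_norm_mul_norm_eq_one {E : Type*}
    [NormedAddCommGroup E] [InnerProductSpace ℝ E] {S : Set E} {w : E}
    (hwS : w ∈ S) (hw : w ≠ 0) :
    ⨆ v : {v : E // v ∈ S ∧ v ≠ 0}, ⟪w, v.1⟫ / (‖w‖ * ‖v.1‖) = 1 := by
  have hle : ∀ v : {v : E // v ∈ S ∧ v ≠ 0}, ⟪w, v.1⟫ / (‖w‖ * ‖v.1‖) ≤ 1 :=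
    fun v => (abs_le.mp (abs_real_inner_div_norm_mul_norm_le_one w v.1)).2
  have : Nonempty {v : E // v ∈ S ∧ v ≠ 0} := ⟨⟨w, hwS, hw⟩⟩
  refine le_antisymm (ciSup_le hle) (le_ciSup_of_le ⟨1, Set.forall_mem_range.mpr hle⟩
    ⟨w, hwS, hw⟩ ?_)
  rw [real_inner_self_eq_norm_mul_norm, div_self (by positivity)]

theorem discrete_infsup_general {U V : Type*}
    [NormedAddCommGroup U] [InnerProductSpace ℝ U]
    [NormedAddCommGroup V] [InnerProductSpace ℝ V]
    (Bs : V →ₗ[ℝ] U) (hIso : ∀ v : V, ‖Bs v‖ = ‖v‖)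
    (b : U → V → ℝ) (hb : ∀ u v, b u v = ⟪u, Bs v⟫)
    (Vd : Submodule ℝ V) (hVd : Vd ≠ ⊥)
    (Ud : Submodule ℝ U) (hUd : Ud = Vd.map Bs) :
    (⨅ u : {u : U // u ∈ Ud ∧ u ≠ 0}, ⨆ v : {v : V // v ∈ Vd ∧ v ≠ 0},
      b u.1 v.1 / (‖u.1‖ * ‖v.1‖)) = 1 := by
  have hinner : ∀ x y, ⟪Bs x, Bs y⟫ = ⟪x, y⟫ := (⟨Bs, hIso⟩ : V →ₗᵢ[ℝ] U).inner_map_map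
  have hne : ∀ w, w ≠ 0 → Bs w ≠ 0 := fun w hw => by
    rwa [← norm_ne_zero_iff, hIso, norm_ne_zero_iff]
  obtain ⟨w₀, hw₀, hw₀ne⟩ := Submodule.exists_mem_ne_zero_of_ne_bot hVd
  have : Nonempty {u : U // u ∈ Ud ∧ u ≠ 0} := ⟨⟨Bs w₀, hUd ▸ ⟨w₀, hw₀, rfl⟩, hne w₀ hw₀ne⟩⟩
  have hsup : ∀ u : {u : U // u ∈ Ud ∧ u ≠ 0},
      ⨆ v : {v : V // v ∈ Vd ∧ v ≠ 0}, b u.1 v.1 / (‖u.1‖ * ‖v.1‖) = 1 := by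
    rintro ⟨_, hu, hu0⟩
    obtain ⟨w, hw, rfl⟩ := hUd ▸ hu
    have hw0 : w ≠ 0 := fun h => hu0 (by simp [h])
    simp only [hb, hinner, hIso]
    exact iSup_real_inner_div_norm_mul_norm_eq_one (S := (Vd : Set V)) hw hw0
  simp only [hsup, ciInf_const]

/-- Discrete inf-sup stability: with `U_δ := B*(V_δ)` for a finite-dimensional test
space `V_δ`, the discrete inf-sup constant equals 1. -/
theorem discrete_infsup {U V : Type*}
    [NormedAddCommGroup U] [InnerProductSpace ℝ U] [CompleteSpace U]
    [NormedAddCommGroup V] [InnerProductSpace ℝ V] [CompleteSpace V]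
    (Bs : V →ₗ[ℝ] U) (hIso : ∀ v : V, ‖Bs v‖ = ‖v‖)
    (b : U → V → ℝ) (hb : ∀ u v, b u v = ⟪u, Bs v⟫)
    (Vd : Submodule ℝ V) [FiniteDimensional ℝ Vd] (hVd : Vd ≠ ⊥)
    (Ud : Submodule ℝ U) (hUd : Ud = Vd.map Bs) :
    (⨅ u : {u : U // u ∈ Ud ∧ u ≠ 0}, ⨆ v : {v : V // v ∈ Vd ∧ v ≠ 0},
      b u.1 v.1 / (‖u.1‖ * ‖v.1‖)) = 1 :=
  discrete_infsup_general Bs hIso b hb Vd hVd Ud hUd
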